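/- arXiv:1403.7801 — 2 statements merged into one kernel-verified Lean document; each statement's English description precedes it below -/
import Mathlib

section
/- Let p be an odd prime, let ε, ε' ∈ 𝔽_p both be non-squares. Then the Cartan non-split groups Γ_ns^ε(p) and Γ_ns^{ε'}(p) are conjugate subgroups of SL₂(ℤ): there exists A ∈ SL₂(ℤ) with A⁻¹ · Γ_ns^ε(p) · A = Γ_ns^{ε'}(p). -/
open Matrix

/-- The Cartan non-split ring mod `p`: the set of matrices `(a b; c d)` over `𝔽_p`
with `a = d` and `c = ε * b`. -/
def CnsSet (p : ℕ) (ε : ZMod p) : Set (Matrix (Fin 2) (Fin 2) (ZMod p)) :=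
  {A | A 0 0 = A 1 1 ∧ A 1 0 = ε * A 0 1}

lemma cns_one (p : ℕ) (ε : ZMod p) : (1 : Matrix (Fin 2) (Fin 2) (ZMod p)) ∈ CnsSet p ε := by
  simp [CnsSet, Matrix.one_apply]

lemma cns_mul {p : ℕ} {ε : ZMod p} {A B : Matrix (Fin 2) (Fin 2) (ZMod p)}
    (hA : A ∈ CnsSet p ε) (hB : B ∈ CnsSet p ε) : A * B ∈ CnsSet p ε := by
  obtain ⟨hA1, hA2⟩ := hA
  obtain ⟨hB1, hB2⟩ := hB
  constructor <;>
    · simp only [Matrix.mul_apply, Fin.sum_univ_two, hA1, hA2, hB1, hB2]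
      ring

lemma cns_adj {p : ℕ} {ε : ZMod p} {A : Matrix (Fin 2) (Fin 2) (ZMod p)}
    (hA : A ∈ CnsSet p ε) : A.adjugate ∈ CnsSet p ε := by
  obtain ⟨hA1, hA2⟩ := hA
  rw [Matrix.adjugate_fin_two]
  refine ⟨by simp [hA1], by simp [hA2]⟩

/-- Reduction modulo `p` on `SL₂`. -/
def redSL (p : ℕ) :
    Matrix.SpecialLinearGroup (Fin 2) ℤ →* Matrix.SpecialLinearGroup (Fin 2) (ZMod p) :=
  Matrix.SpecialLinearGroup.map (Int.castRingHom (ZMod p))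

/-- The determinant-one part of the Cartan non-split ring, as a subgroup of `SL₂(𝔽_p)`. -/
def CnsSL (p : ℕ) (ε : ZMod p) : Subgroup (Matrix.SpecialLinearGroup (Fin 2) (ZMod p)) where
  carrier := {A | (A : Matrix (Fin 2) (Fin 2) (ZMod p)) ∈ CnsSet p ε}
  one_mem' := by simpa using cns_one p ε
  mul_mem' := by
    intro A B hA hB
    simpa using cns_mul hA hB
  inv_mem' := by
    intro A hA
    simp only [Set.mem_setOf_eq, Matrix.SpecialLinearGroup.coe_inv] at hA ⊢
    exact cns_adj hA

/-- The Cartan non-split group `Γ_ns^ε(p)`: the subgroup of `SL₂(ℤ)` of matrices whose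
reduction modulo `p` lies in the Cartan non-split ring. -/
def GammaNs (p : ℕ) (ε : ZMod p) : Subgroup (Matrix.SpecialLinearGroup (Fin 2) ℤ) :=
  (CnsSL p ε).comap (redSL p)

/-!
If `ε = l² ε'`, conjugation by `diag(1, l)` carries the Cartan ring `C_ns^{ε'}` onto
`C_ns^ε`. Its determinant `l` is corrected by an element `K ∈ C_ns^{ε'}` of determinant `l⁻¹`:
one exists because the norm form `a² - ε' b²` of `𝔽_p(√ε')/𝔽_p` is surjective, and conjugation
by `K` fixes the commutative ring `C_ns^{ε'}` pointwise. The resulting element of `SL₂(𝔽_p)` lifts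
to `SL₂(ℤ)`, and conjugation by a lift carries `Γ_ns^{ε'}(p)` onto `Γ_ns^ε(p)`.
-/

namespace FiniteField

variable {F : Type*} [Field F] [Fintype F]

theorem exists_eq_sq_mul_of_not_isSquare {ε ε' : F} (hε : ¬IsSquare ε) (hε' : ¬IsSquare ε') :
    ∃ l : F, ε = l ^ 2 * ε' := by
  classical
  have hε'0 : ε' ≠ 0 := by rintro rfl; exact hε' ⟨0, by simp⟩
  have hε0 : ε ≠ 0 := by rintro rfl; exact hε ⟨0, by simp⟩
  have hεε' : quadraticChar F (ε * ε') = 1 := by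
    rw [map_mul, quadraticChar_neg_one_iff_not_isSquare.mpr hε,
      quadraticChar_neg_one_iff_not_isSquare.mpr hε']
    norm_num
  obtain ⟨r, hr⟩ := (quadraticChar_one_iff_isSquare (mul_ne_zero hε0 hε'0)).mp hεε'
  refine ⟨r / ε', ?_⟩
  field_simp
  linear_combination hr

theorem exists_sq_sub_mul_sq_eq {ε : F} (hε : ε ≠ 0) (c : F) :
    ∃ a b : F, a ^ 2 - ε * b ^ 2 = c := by
  by_cases hF : ringChar F = 2
  · obtain ⟨r, rfl⟩ := isSquare_of_char_two hF c
    exact ⟨r, 0, by ring⟩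
  open Polynomial in
  obtain ⟨a, b, hab⟩ := exists_root_sum_quadratic (f := X ^ 2 - C c) (g := C (-ε) * X ^ 2)
    (degree_X_pow_sub_C two_pos c) (degree_C_mul_X_pow 2 (neg_ne_zero.mpr hε))
    (odd_card_of_char_ne_two hF)
  refine ⟨a, b, ?_⟩
  simp only [eval_sub, eval_mul, eval_pow, eval_X, eval_C] at hab
  linear_combination hab

end FiniteField

namespace ZMod

theorem exists_isCoprime_intCast_eq {p : ℕ} [Fact p.Prime] (x : ZMod p) {y : ZMod p}
    (hy : y ≠ 0) : ∃ c d : ℤ, IsCoprime c d ∧ (c : ZMod p) = x ∧ (d : ZMod p) = y := by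
  obtain ⟨d, rfl⟩ := intCast_surjective y
  obtain ⟨s, hs⟩ := intCast_surjective ((x - 1) / (d : ZMod p))
  refine ⟨1 + d * s, d, ⟨1, -s, by ring⟩, ?_, rfl⟩
  push_cast
  rw [hs]
  field_simp
  ring

end ZMod

theorem Set.image_conj_eq_of_forall_mem_iff {G : Type*} [Group G] {A : G} {S T : Set G}
    (h : ∀ g, g ∈ T ↔ A * g * A⁻¹ ∈ S) : (fun g => A⁻¹ * g * A) '' S = T := by
  ext g
  constructor
  · rintro ⟨x, hx, rfl⟩
    rwa [h, show A * (A⁻¹ * x * A) * A⁻¹ = x by group]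
  · exact fun hg => ⟨A * g * A⁻¹, (h g).1 hg, by group⟩

open scoped MatrixGroups

section Cartan

variable {p : ℕ}

theorem commute_of_mem_cnsSet {ε : ZMod p} {A B : Matrix (Fin 2) (Fin 2) (ZMod p)}
    (hA : A ∈ CnsSet p ε) (hB : B ∈ CnsSet p ε) : Commute A B := by
  obtain ⟨hA₁, hA₂⟩ := hA
  obtain ⟨hB₁, hB₂⟩ := hB
  ext i j
  fin_cases i <;> fin_cases j <;>
    · simp only [Fin.zero_eta, Fin.mk_one, Matrix.mul_apply, Fin.sum_univ_two, hA₁, hA₂, hB₁, hB₂]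
      ring

theorem conj_mem_cnsSet_iff {ε : ZMod p} {K : Matrix (Fin 2) (Fin 2) (ZMod p)}
    (hK : K ∈ CnsSet p ε) (hdet : IsUnit K.det) (N : Matrix (Fin 2) (Fin 2) (ZMod p)) :
    K * N * K⁻¹ ∈ CnsSet p ε ↔ N ∈ CnsSet p ε := by
  constructor
  · intro hconj
    have hKN : K * N = K * (K * N * K⁻¹) := by
      rw [← (commute_of_mem_cnsSet hconj hK).eq, nonsing_inv_mul_cancel_right K _ hdet]
    rwa [((isUnit_iff_isUnit_det K).mpr hdet).mul_left_cancel hKN]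
  · intro hN
    rwa [(commute_of_mem_cnsSet hK hN).eq, mul_nonsing_inv_cancel_right K _ hdet]

theorem diagonal_conj_mem_cnsSet_iff [Fact p.Prime] {l : ZMod p} (hl : l ≠ 0) (ε : ZMod p)
    (N : Matrix (Fin 2) (Fin 2) (ZMod p)) :
    diagonal ![1, l] * N * diagonal ![1, l⁻¹] ∈ CnsSet p (l ^ 2 * ε) ↔ N ∈ CnsSet p ε := by
  simp only [CnsSet, Set.mem_ofPred_eq, mul_diagonal, diagonal_mul, cons_val_zero, cons_val_one,
    cons_val_fin_one, one_mul, mul_one]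
  field_simp

theorem exists_conj_mem_cnsSL_iff [Fact p.Prime] {ε l : ZMod p} (hε : ε ≠ 0) (hl : l ≠ 0) :
    ∃ M : SL(2, ZMod p), ∀ N, N ∈ CnsSL p ε ↔ M * N * M⁻¹ ∈ CnsSL p (l ^ 2 * ε) := by
  obtain ⟨a, b, hab⟩ := FiniteField.exists_sq_sub_mul_sq_eq hε l⁻¹
  set K : Matrix (Fin 2) (Fin 2) (ZMod p) := !![a, b; ε * b, a]
  have hK : K ∈ CnsSet p ε := ⟨rfl, rfl⟩
  have hKdet : K.det = l⁻¹ := by rw [det_fin_two_of, ← hab]; ring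
  set D : Matrix (Fin 2) (Fin 2) (ZMod p) := diagonal ![1, l]
  have hMdet : (D * K).det = 1 := by simp [D, hKdet, hl]
  have hDinv : D⁻¹ = diagonal ![1, l⁻¹] := by
    refine inv_eq_left_inv ?_
    rw [diagonal_mul_diagonal, ← diagonal_one]
    congr 1
    ext i
    fin_cases i <;> simp [hl]
  refine ⟨⟨D * K, hMdet⟩, fun N => ?_⟩
  have hadj : adjugate (D * K) = (D * K)⁻¹ := by rw [inv_def, hMdet, Ring.inverse_one, one_smul]
  change (N : Matrix _ _ _) ∈ CnsSet p ε ↔ (D * K * N * adjugate (D * K)) ∈ CnsSet p (l ^ 2 * ε)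
  rw [hadj, Matrix.mul_inv_rev, hDinv, show D * K * N * (K⁻¹ * diagonal ![1, l⁻¹]) =
      D * (K * N * K⁻¹) * diagonal ![1, l⁻¹] by simp only [Matrix.mul_assoc],
    diagonal_conj_mem_cnsSet_iff hl, conj_mem_cnsSet_iff hK (by simp [hKdet, hl])]

theorem redSL_surjective [Fact p.Prime] : Function.Surjective (redSL p) := by
  intro M
  have hdet : M 0 0 * M 1 1 - M 0 1 * M 1 0 = 1 := by rw [← det_fin_two]; exact M.det_coe
  obtain ⟨c, d, ⟨u, v, huv⟩, hc, hd⟩ :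
      ∃ c d : ℤ, IsCoprime c d ∧ (c : ZMod p) = M 1 0 ∧ (d : ZMod p) = M 1 1 := by
    by_cases h : M 1 1 = 0
    · have h' : M 1 0 ≠ 0 := by rintro h'; simp [h, h'] at hdet
      obtain ⟨d, c, hdc, hd, hc⟩ := ZMod.exists_isCoprime_intCast_eq (M 1 1) h'
      exact ⟨c, d, hdc.symm, hc, hd⟩
    · exact ZMod.exists_isCoprime_intCast_eq (M 1 0) h
  obtain ⟨a, ha⟩ := ZMod.intCast_surjective (M 0 0)
  obtain ⟨b, hb⟩ := ZMod.intCast_surjective (M 0 1)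
  obtain ⟨m, hm⟩ : (p : ℤ) ∣ a * d - b * c - 1 := by
    rw [← ZMod.intCast_zmod_eq_zero_iff_dvd]
    push_cast
    rw [ha, hb, hc, hd, hdet, sub_self]
  -- `u c + v d = 1` lets us move the top row by `p m (-v, u)` to make the determinant exactly `1`.
  refine ⟨⟨!![a - p * m * v, b + p * m * u; c, d], ?_⟩, ?_⟩
  · rw [det_fin_two_of]
    linear_combination hm - (p * m) * huv
  · ext i j
    change ((!![a - p * m * v, b + p * m * u; c, d] i j : ℤ) : ZMod p) = M i j
    fin_cases i <;> fin_cases j <;> simp [ha, hb, hc, hd]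

theorem exists_conj_mem_gammaNs_iff [Fact p.Prime] {ε l : ZMod p} (hε : ε ≠ 0) (hl : l ≠ 0) :
    ∃ A : SL(2, ℤ), ∀ g, g ∈ GammaNs p ε ↔ A * g * A⁻¹ ∈ GammaNs p (l ^ 2 * ε) := by
  obtain ⟨M, hM⟩ := exists_conj_mem_cnsSL_iff hε hl
  obtain ⟨A, rfl⟩ := redSL_surjective M
  exact ⟨A, fun g => by
    simpa only [GammaNs, Subgroup.mem_comap, map_mul, map_inv] using hM (redSL p g)⟩

end Cartan

theorem cartan_groups_conjugate_general (p : ℕ) [Fact p.Prime]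
    (ε ε' : ZMod p) (hε : ¬ IsSquare ε) (hε' : ¬ IsSquare ε') :
    ∃ A : Matrix.SpecialLinearGroup (Fin 2) ℤ,
      (fun g => A⁻¹ * g * A) '' (GammaNs p ε : Set (Matrix.SpecialLinearGroup (Fin 2) ℤ))
        = (GammaNs p ε' : Set (Matrix.SpecialLinearGroup (Fin 2) ℤ)) := by
  obtain ⟨l, rfl⟩ := FiniteField.exists_eq_sq_mul_of_not_isSquare hε hε'
  have hl : l ≠ 0 := by rintro rfl; exact hε ⟨0, by simp⟩
  have hε'0 : ε' ≠ 0 := by rintro rfl; exact hε' ⟨0, by simp⟩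
  obtain ⟨A, hA⟩ := exists_conj_mem_gammaNs_iff hε'0 hl
  exact ⟨A, Set.image_conj_eq_of_forall_mem_iff hA⟩

/-- Any two Cartan non-split groups (for two non-squares `ε, ε'` mod `p`) are conjugate
in `SL₂(ℤ)`. -/
theorem cartan_groups_conjugate (p : ℕ) [Fact p.Prime] (hp : Odd p)
    (ε ε' : ZMod p) (hε : ¬ IsSquare ε) (hε' : ¬ IsSquare ε') :
    ∃ A : Matrix.SpecialLinearGroup (Fin 2) ℤ,
      (fun g => A⁻¹ * g * A) '' (GammaNs p ε : Set (Matrix.SpecialLinearGroup (Fin 2) ℤ))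
        = (GammaNs p ε' : Set (Matrix.SpecialLinearGroup (Fin 2) ℤ)) :=
  cartan_groups_conjugate_general p ε ε' hε hε'
end

section
/- Let p be an odd prime and let ε ∈ 𝔽_p be a non-square. Then Γ(p) is a normal subgroup of the Cartan non-split group Γ_ns^ε(p), and the quotient group Γ_ns^ε(p)/Γ(p) is cyclic of order p+1, i.e. isomorphic to ℤ/(p+1)ℤ. -/
open Matrix

instance gammaSubgroupOf_normal (p : ℕ) (ε : ZMod p) :
    ((CongruenceSubgroup.Gamma p).subgroupOf (GammaNs p ε)).Normal :=
  (CongruenceSubgroup.Gamma_normal p).subgroupOf _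

/-!
Reduction modulo `p` maps `Γ_ns^ε(p)` onto the determinant-one part of the Cartan ring, since
`SL₂(ℤ) → SL₂(𝔽_p)` is onto (`SL₂` of a field is generated by transvections), and its kernel is
`Γ(p)`. The Cartan ring is the image of `QuadraticAlgebra (ZMod p) ε 0 = 𝔽_p(√ε) ≅ 𝔽_{p²}` under
its regular representation `a + bη ↦ (a b; εb a)`, and the determinant is the norm `z * z̄`.
By Euler's criterion `η ^ p = -η`, so `z̄ = z ^ p` and the determinant-one elements are the
`(p + 1)`-st roots of unity of the cyclic group `𝔽_{p²}ˣ`, of which there are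
`gcd (p² - 1, p + 1) = p + 1`.
-/

open scoped MatrixGroups

theorem Matrix.SpecialLinearGroup.SL2.map_surjective {R F : Type*} [CommRing R] [Field F]
    {f : R →+* F} (hf : Function.Surjective f) :
    Function.Surjective (map f : SL(2, R) →* SL(2, F)) := by
  intro A
  induction A using SL2.transvection_induction with
  | htransvec i j hij c =>
    obtain ⟨r, rfl⟩ := hf c
    refine ⟨(⟨Matrix.transvection i j r, det_transvection_of_ne i j hij r⟩ : SL(2, R)), ?_⟩
    apply Subtype.ext
    refine (map_apply_coe f _).trans ?_
    change f.mapMatrix (Matrix.transvection i j r) = Matrix.transvection i j (f r)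
    rw [RingHom.mapMatrix_apply, Matrix.transvection, Matrix.transvection,
      Matrix.map_add _ (map_add f), Matrix.map_one _ f.map_zero f.map_one, Matrix.map_single]
  | hmul A B hA hB =>
    obtain ⟨A', rfl⟩ := hA
    obtain ⟨B', rfl⟩ := hB
    exact ⟨A' * B', map_mul _ _ _⟩

noncomputable def QuotientGroup.comapQuotientKerEquivOfSurjective {G H : Type*} [Group G]
    [Group H] (φ : G →* H) (hφ : Function.Surjective φ) (K : Subgroup H) :
    K.comap φ ⧸ φ.ker.subgroupOf (K.comap φ) ≃* K :=
  let ψ : K.comap φ →* K := (φ.domRestrict (K.comap φ)).codRestrict K fun g => g.2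
  have hψ : Function.Surjective ψ := fun k => by
    obtain ⟨g, hg⟩ := hφ k
    exact ⟨⟨g, show φ g ∈ K from hg ▸ k.2⟩, Subtype.ext hg⟩
  have hker : ψ.ker = φ.ker.subgroupOf (K.comap φ) := MonoidHom.ker_codRestrict _ _ _
  (quotientMulEquivOfEq hker.symm).trans (quotientKerEquivOfSurjective ψ hψ)

namespace FiniteField

variable {F : Type*} [Field F] [Fintype F] {a : F}

theorem ringChar_ne_two_of_not_isSquare (ha : ¬IsSquare a) : ringChar F ≠ 2 :=
  fun h => ha (isSquare_of_char_two h a)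

theorem pow_card_div_two_eq_neg_one (ha : ¬IsSquare a) : a ^ (Fintype.card F / 2) = -1 := by
  have hF := ringChar_ne_two_of_not_isSquare ha
  have ha0 : a ≠ 0 := by
    rintro rfl
    exact ha IsSquare.zero
  exact (pow_dichotomy hF ha0).resolve_left fun h => ha ((isSquare_iff hF ha0).mpr h)

end FiniteField

namespace QuadraticAlgebra

instance {R : Type*} [Finite R] {a b : R} : Finite (QuadraticAlgebra R a b) :=
  .of_equiv _ (equivProd a b).symm

section CommRing

variable {R : Type*} [CommRing R] {a b : R}

def toMatrix : QuadraticAlgebra R a b →ₐ[R] Matrix (Fin 2) (Fin 2) R :=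
  lift ⟨!![0, 1; a, b], by
    ext i j; fin_cases i <;> fin_cases j <;> simp [Matrix.mul_apply, Fin.sum_univ_two]⟩

theorem toMatrix_apply (z : QuadraticAlgebra R a b) :
    toMatrix z = !![z.re, z.im; a * z.im, z.re + b * z.im] := by
  ext i j; fin_cases i <;> fin_cases j <;> simp [toMatrix, mul_comm]

theorem toMatrix_injective : Function.Injective (toMatrix : QuadraticAlgebra R a b → _) := by
  intro z w h
  rw [toMatrix_apply, toMatrix_apply] at h
  ext
  · simpa using congrFun (congrFun h 0) 0
  · simpa using congrFun (congrFun h 0) 1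

theorem det_toMatrix (z : QuadraticAlgebra R a b) : (toMatrix z).det = norm z := by
  rw [toMatrix_apply, det_fin_two_of, norm_def]
  ring

end CommRing

section FiniteField

variable {F : Type*} [Field F] [Fintype F] {a b : F}

theorem omega_pow_card (ha : ¬IsSquare a) :
    (ω : QuadraticAlgebra F a 0) ^ Fintype.card F = -ω := by
  obtain ⟨k, hk⟩ : Odd (Fintype.card F) := Nat.odd_iff.mpr
    (FiniteField.odd_card_of_char_ne_two (FiniteField.ringChar_ne_two_of_not_isSquare ha))
  have hk' : Fintype.card F / 2 = k := by omega
  rw [hk, pow_succ', pow_mul, sq, omega_mul_omega_eq_algebraMap, map_zero, zero_mul, add_zero,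
    ← map_pow, ← hk', FiniteField.pow_card_div_two_eq_neg_one ha, map_neg, map_one, mul_neg_one]

theorem star_eq_pow_card (ha : ¬IsSquare a) (z : QuadraticAlgebra F a 0) :
    star z = z ^ Fintype.card F := by
  obtain ⟨x, y⟩ := z
  change _ = FiniteField.frobeniusAlgHom F (QuadraticAlgebra F a 0) _
  conv_rhs => rw [mk_eq_add_smul_omega, map_add, map_smul, AlgHom.commutes]
  rw [FiniteField.frobeniusAlgHom_apply, omega_pow_card ha]
  ext <;> simp

theorem algebraMap_norm_eq_pow_card_add_one (ha : ¬IsSquare a) (z : QuadraticAlgebra F a 0) :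
    algebraMap F _ (norm z) = z ^ (Fintype.card F + 1) := by
  rw [algebraMap_norm_eq_mul_star, star_eq_pow_card ha, pow_succ']

theorem pow_card_add_one_eq_one_iff (ha : ¬IsSquare a) (z : QuadraticAlgebra F a 0) :
    z ^ (Fintype.card F + 1) = 1 ↔ norm z = 1 := by
  rw [← algebraMap_norm_eq_pow_card_add_one ha, ← map_one (algebraMap F _), algebraMap_inj]

noncomputable def rootsOfUnityToSL (ha : ¬IsSquare a) :
    rootsOfUnity (Fintype.card F + 1) (QuadraticAlgebra F a 0) →* SL(2, F) where
  toFun u := ⟨toMatrix (u.1 : QuadraticAlgebra F a 0), by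
    rw [det_toMatrix, ← pow_card_add_one_eq_one_iff ha]
    exact (mem_rootsOfUnity' _ _).mp u.2⟩
  map_one' := Subtype.ext (by simp)
  map_mul' _ _ := Subtype.ext (map_mul toMatrix _ _)

@[simp]
theorem coe_rootsOfUnityToSL (ha : ¬IsSquare a)
    (u : rootsOfUnity (Fintype.card F + 1) (QuadraticAlgebra F a 0)) :
    (rootsOfUnityToSL ha u : Matrix (Fin 2) (Fin 2) F) = toMatrix (u.1 : QuadraticAlgebra F a 0) :=
  rfl

theorem rootsOfUnityToSL_injective (ha : ¬IsSquare a) :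
    Function.Injective (rootsOfUnityToSL ha) := fun _ _ h =>
  Subtype.ext <| Units.ext <| toMatrix_injective <| congrArg Subtype.val h

theorem mem_range_rootsOfUnityToSL (ha : ¬IsSquare a) {A : SL(2, F)} :
    A ∈ (rootsOfUnityToSL ha).range ↔ A 0 0 = A 1 1 ∧ A 1 0 = a * A 0 1 := by
  constructor
  · rintro ⟨u, rfl⟩
    simp [toMatrix_apply]
  · rintro ⟨h11, h10⟩
    set z : QuadraticAlgebra F a 0 := ⟨A 0 0, A 0 1⟩
    have hz : toMatrix z = A := by
      rw [toMatrix_apply]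
      ext i j; fin_cases i <;> fin_cases j <;> simp [z, h11, h10]
    have hz1 : z ^ (Fintype.card F + 1) = 1 := by
      rw [pow_card_add_one_eq_one_iff ha, ← det_toMatrix, hz, A.2]
    exact ⟨rootsOfUnity.mkOfPowEq z hz1, Subtype.ext hz⟩

theorem card_rootsOfUnity_card_add_one [Fact (∀ r : F, r ^ 2 ≠ a + b * r)] :
    Nat.card (rootsOfUnity (Fintype.card F + 1) (QuadraticAlgebra F a b)) =
      Fintype.card F + 1 := by
  have hcard : Nat.card (QuadraticAlgebra F a b) = Fintype.card F ^ 2 := by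
    rw [Nat.card_congr (equivProd a b), Nat.card_prod, Nat.card_eq_fintype_card, sq]
  rw [rootsOfUnity_eq_ker, IsCyclic.card_powMonoidHom_ker, Nat.card_units, hcard]
  refine Nat.gcd_eq_right ⟨Fintype.card F - 1, ?_⟩
  have : 1 ≤ Fintype.card F := Fintype.card_pos
  zify [this, Nat.one_le_pow 2 _ this]
  ring

end FiniteField

end QuadraticAlgebra

open QuadraticAlgebra in
noncomputable def cnsSLEquivRootsOfUnity {p : ℕ} [Fact p.Prime] {ε : ZMod p}
    (hε : ¬IsSquare ε) :
    CnsSL p ε ≃* rootsOfUnity (p + 1) (QuadraticAlgebra (ZMod p) ε 0) :=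
  have hrange : (rootsOfUnityToSL hε).range = CnsSL p ε :=
    Subgroup.ext fun _ => mem_range_rootsOfUnityToSL hε
  ((MonoidHom.ofInjective (rootsOfUnityToSL_injective hε)).trans
    (MulEquiv.subgroupCongr hrange)).symm.trans (MulEquiv.subgroupCongr (by rw [ZMod.card]))

theorem gammaNs_quotient_cyclic_general (p : ℕ) [Fact p.Prime]
    (ε : ZMod p) (hε : ¬ IsSquare ε) :
    ((CongruenceSubgroup.Gamma p).subgroupOf (GammaNs p ε)).Normal ∧
    IsCyclic (GammaNs p ε ⧸ (CongruenceSubgroup.Gamma p).subgroupOf (GammaNs p ε)) ∧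
    Nat.card (GammaNs p ε ⧸ (CongruenceSubgroup.Gamma p).subgroupOf (GammaNs p ε))
      = p + 1 ∧
    Nonempty ((GammaNs p ε ⧸ (CongruenceSubgroup.Gamma p).subgroupOf (GammaNs p ε))
      ≃* Multiplicative (ZMod (p + 1))) := by
  have : Fact (∀ r : ZMod p, r ^ 2 ≠ ε + 0 * r) :=
    ⟨fun r hr => hε ⟨r, by linear_combination -hr⟩⟩
  let e : GammaNs p ε ⧸ (CongruenceSubgroup.Gamma p).subgroupOf (GammaNs p ε) ≃*
      rootsOfUnity (p + 1) (QuadraticAlgebra (ZMod p) ε 0) :=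
    (QuotientGroup.comapQuotientKerEquivOfSurjective (redSL p)
      (SpecialLinearGroup.SL2.map_surjective ZMod.intCast_surjective) (CnsSL p ε)).trans
      (cnsSLEquivRootsOfUnity hε)
  have hcyc := isCyclic_of_surjective e.symm e.symm.surjective
  have hcard : Nat.card (GammaNs p ε ⧸ (CongruenceSubgroup.Gamma p).subgroupOf (GammaNs p ε))
      = p + 1 := by
    have hroots := QuadraticAlgebra.card_rootsOfUnity_card_add_one (F := ZMod p) (a := ε) (b := 0)
    rw [ZMod.card] at hroots
    rw [Nat.card_congr e.toEquiv, hroots]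
  exact ⟨inferInstance, hcyc, hcard, ⟨hcard ▸ (zmodCyclicMulEquiv hcyc).symm⟩⟩

/-- `Γ(p)` is normal in `Γ_ns^ε(p)` and the quotient is cyclic of order `p + 1`,
i.e. isomorphic to `ℤ/(p+1)ℤ`. -/
theorem gammaNs_quotient_cyclic (p : ℕ) [Fact p.Prime] (hp : Odd p)
    (ε : ZMod p) (hε : ¬ IsSquare ε) :
    ((CongruenceSubgroup.Gamma p).subgroupOf (GammaNs p ε)).Normal ∧
    IsCyclic (GammaNs p ε ⧸ (CongruenceSubgroup.Gamma p).subgroupOf (GammaNs p ε)) ∧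
    Nat.card (GammaNs p ε ⧸ (CongruenceSubgroup.Gamma p).subgroupOf (GammaNs p ε))
      = p + 1 ∧
    Nonempty ((GammaNs p ε ⧸ (CongruenceSubgroup.Gamma p).subgroupOf (GammaNs p ε))
      ≃* Multiplicative (ZMod (p + 1))) :=
  gammaNs_quotient_cyclic_general p ε hε
end
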